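/- In an objective partial group (L, Δ), if g ∈ L and X ∈ Δ with Y := X^g ∈ Δ, then N_L(X) ⊆ D(g) and conjugation c_g : N_L(X) → N_L(Y) is an isomorphism of groups. -/

import Mathlib

universe u

structure PartialGroupOn (L : Type u) : Type u where
  nonempty : Nonempty L
  D : Set (List L)
  Pi : List L → L
  inv : L → L
  mem_single : ∀ x : L, [x] ∈ D
  mem_append_left : ∀ u v : List L, u ++ v ∈ D → u ∈ D
  mem_append_right : ∀ u v : List L, u ++ v ∈ D → v ∈ D
  Pi_single : ∀ x : L, Pi [x] = x
  mem_assoc : ∀ u v w : List L, u ++ v ++ w ∈ D → u ++ [Pi v] ++ w ∈ D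
  Pi_assoc : ∀ u v w : List L, u ++ v ++ w ∈ D →
    Pi (u ++ v ++ w) = Pi (u ++ [Pi v] ++ w)
  inv_inv : ∀ x : L, inv (inv x) = x
  mem_inv : ∀ w ∈ D, (w.reverse.map inv) ++ w ∈ D
  Pi_inv : ∀ w ∈ D, Pi ((w.reverse.map inv) ++ w) = Pi []

namespace PartialGroupOn

variable {L : Type u} (M : PartialGroupOn L)

/-- The inverse of a word: reverse the word and invert each entry. -/
def wordInv (w : List L) : List L := w.reverse.map M.inv

/-- The identity element `1 = Π(∅)`. -/
def one : L := M.Pi []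

/-- Conjugation `x ↦ x^g = Π(g⁻¹, x, g)`. -/
def conj (x g : L) : L := M.Pi [M.inv g, x, g]

/-- `D(g)` is the set of `x` for which `x^g` is defined. -/
def Dg (g : L) : Set L := {x | [M.inv g, x, g] ∈ M.D}

/-- A partial subgroup: a nonempty subset closed under inversion and under the
product applied to words in `D` with entries in the subset. -/
def IsPartialSubgroup (H : Set L) : Prop :=
  H.Nonempty ∧ (∀ x ∈ H, M.inv x ∈ H) ∧
    ∀ w : List L, (∀ x ∈ w, x ∈ H) → w ∈ M.D → M.Pi w ∈ H

/-- A partial normal subgroup of `L`. -/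
def IsPartialNormal (N : Set L) : Prop :=
  M.IsPartialSubgroup N ∧
    ∀ x ∈ N, ∀ g : L, [M.inv g, x, g] ∈ M.D → M.conj x g ∈ N

/-- A subgroup of `L`: a partial subgroup `H` with `W(H) ⊆ D`. -/
def IsSubgroup (H : Set L) : Prop :=
  M.IsPartialSubgroup H ∧ ∀ w : List L, (∀ x ∈ w, x ∈ H) → w ∈ M.D

/-- `X ⊆ D(g)`, i.e. `X^g` is defined. -/
def setConjDef (X : Set L) (g : L) : Prop := ∀ x ∈ X, [M.inv g, x, g] ∈ M.D

/-- The conjugate set `X^g`. -/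
def setConj (X : Set L) (g : L) : Set L := {y | ∃ x ∈ X, y = M.conj x g}

/-- `viaChain Δ w X` says that `w = (g₁,…,gₙ)` is in `D` via the chain
`X = X₀, X₁ = X₀^{g₁}, …` of members of `Δ`. -/
def viaChain (Δ : Set (Set L)) : List L → Set L → Prop
  | [], X => X ∈ Δ
  | g :: w, X => X ∈ Δ ∧ M.setConjDef X g ∧ viaChain Δ w (M.setConj X g)

/-- `(L, Δ)` is an objective partial group: every member of `Δ` is a subgroup,
(O1) `D = D_Δ`, and (O2) the overgroup-closure condition. -/
def Objective (Δ : Set (Set L)) : Prop :=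
  (∀ X ∈ Δ, M.IsSubgroup X) ∧
  (M.D = {w | ∃ X : Set L, M.viaChain Δ w X}) ∧
  (∀ X ∈ Δ, ∀ Y ∈ Δ, ∀ g : L, M.setConjDef X g → M.IsSubgroup (M.setConj X g) →
    M.setConj X g ⊆ Y →
    ∀ Z : Set L, M.IsSubgroup Z → M.setConj X g ⊆ Z → Z ⊆ Y → Z ∈ Δ)

/-- The normalizer `N_L(X) = {g : X^g = X}`. -/
def normalizer (X : Set L) : Set L := {g | M.setConjDef X g ∧ M.setConj X g = X}

/-- `S_g = {x ∈ D(g) ∩ S : x^g ∈ S}`. -/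
def Sg (S : Set L) (g : L) : Set L :=
  {x | x ∈ S ∧ [M.inv g, x, g] ∈ M.D ∧ M.conj x g ∈ S}

/-- `S_w`: the set of `x ∈ S` successively conjugated into `S` by the entries
of the word `w`. -/
def Sw (S : Set L) : List L → Set L
  | [] => S
  | g :: w => {x | x ∈ S ∧ [M.inv g, x, g] ∈ M.D ∧ M.conj x g ∈ Sw S w}

/-- A `p`-subgroup: a subgroup whose cardinality is a power of `p`. -/
def IsPSubgroup (p : ℕ) (H : Set L) : Prop :=
  M.IsSubgroup H ∧ ∃ n : ℕ, Nat.card H = p ^ n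

/-- `(L, Δ, S)` is a locality. -/
def IsLocality (p : ℕ) (Δ : Set (Set L)) (S : Set L) : Prop :=
  p.Prime ∧ Finite L ∧ S ∈ Δ ∧ (∀ X ∈ Δ, X ⊆ S) ∧ M.Objective Δ ∧
    M.IsPSubgroup p S ∧
    ∀ H : Set L, M.IsPSubgroup p H → S ⊆ H → H = S

/-- The product set `XY` of two subsets of `L`. -/
def setProd (X Y : Set L) : Set L :=
  {z | ∃ a ∈ X, ∃ b ∈ Y, [a, b] ∈ M.D ∧ z = M.Pi [a, b]}

/-- A homomorphism of partial groups. -/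
def IsHom {L' : Type u} (M' : PartialGroupOn L') (β : L → L') : Prop :=
  (∀ w ∈ M.D, w.map β ∈ M'.D) ∧ ∀ w ∈ M.D, β (M.Pi w) = M'.Pi (w.map β)

end PartialGroupOn

/-!
Conjugation by `g` carries a word through a chain of objects `X^g → X → … → X → X^g`, where
each inner letter normalizes `X`: the segment `g⁻¹ x g` leads from `X^g` back to `X^g`, so by
(O1) all the words `g⁻¹ x g`, `g⁻¹ a g g⁻¹ b g`, … built from elements of `N_L(X)` lie in `D`.
Once these words are known to be in `D`, the group identities `(x^g)^{g⁻¹} = x`,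
`(ab)^g = a^g b^g` and `(x^g)^{a^g} = (x^a)^g` follow from associativity by cancelling the
factors `g g⁻¹`. The inverse of `c_g` is `c_{g⁻¹} : N_L(X^g) → N_L(X)`.
-/

namespace PartialGroupOn

variable {L : Type u} (M : PartialGroupOn L)

theorem wordInv_append (u v : List L) : M.wordInv (u ++ v) = M.wordInv v ++ M.wordInv u := by
  simp [wordInv]

theorem wordInv_wordInv (w : List L) : M.wordInv (M.wordInv w) = w := by
  simp [wordInv, List.map_reverse, Function.comp_def, M.inv_inv]

theorem mem_wordInv_append {u v : List L} (h : u ++ v ∈ M.D) :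
    M.wordInv u ++ u ++ v ∈ M.D := by
  have h' := M.mem_inv _ h
  rw [← wordInv, wordInv_append, List.append_assoc] at h'
  simpa only [List.append_assoc] using M.mem_append_right _ _ h'

theorem mem_append_wordInv {u v : List L} (h : u ++ v ∈ M.D) :
    u ++ v ++ M.wordInv v ∈ M.D := by
  have hinv : M.wordInv (u ++ v) ∈ M.D := M.mem_append_left _ _ (M.mem_inv _ h)
  have h' := M.mem_inv _ hinv
  rw [← wordInv, wordInv_wordInv, wordInv_append] at h'
  exact M.mem_append_left _ (M.wordInv u) (by simpa using h')

theorem mem_D_append_map_Pi_and_Pi_append_flatten (ws : List (List L)) :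
    ∀ u : List L, u ++ ws.flatten ∈ M.D →
      u ++ ws.map M.Pi ∈ M.D ∧ M.Pi (u ++ ws.flatten) = M.Pi (u ++ ws.map M.Pi) := by
  induction ws with
  | nil => exact fun u h => ⟨h, rfl⟩
  | cons w ws ih =>
    intro u h
    have h' : u ++ w ++ ws.flatten ∈ M.D := by simpa using h
    obtain ⟨hmem, hPi⟩ := ih (u ++ [M.Pi w]) (M.mem_assoc u w _ h')
    refine ⟨by simpa using hmem, ?_⟩
    rw [List.flatten_cons, ← List.append_assoc, M.Pi_assoc u w _ h', hPi]
    simp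

theorem map_Pi_mem_D {ws : List (List L)} (h : ws.flatten ∈ M.D) : ws.map M.Pi ∈ M.D :=
  (M.mem_D_append_map_Pi_and_Pi_append_flatten ws [] h).1

theorem Pi_flatten {ws : List (List L)} (h : ws.flatten ∈ M.D) :
    M.Pi ws.flatten = M.Pi (ws.map M.Pi) :=
  (M.mem_D_append_map_Pi_and_Pi_append_flatten ws [] h).2

theorem mem_D_pair_inv_and_Pi_eq_one (q : L) : [q, M.inv q] ∈ M.D ∧ M.Pi [q, M.inv q] = M.one := by
  have hw : M.wordInv [M.inv q] ++ [M.inv q] = [q, M.inv q] := by simp [wordInv, M.inv_inv]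
  rw [← hw]
  exact ⟨M.mem_inv _ (M.mem_single _), M.Pi_inv _ (M.mem_single _)⟩

theorem Pi_cancel {u w v : List L} (hw : M.Pi w = M.one) (h : u ++ w ++ v ∈ M.D)
    (h' : u ++ v ∈ M.D) : M.Pi (u ++ w ++ v) = M.Pi (u ++ v) := by
  rw [M.Pi_assoc u w v h, hw, one, ← M.Pi_assoc u [] v (by simpa using h'), List.append_nil]

theorem Pi_cancel_pair_inv {u v : List L} (g : L) (h : u ++ [g, M.inv g] ++ v ∈ M.D)
    (h' : u ++ v ∈ M.D) : M.Pi (u ++ [g, M.inv g] ++ v) = M.Pi (u ++ v) :=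
  M.Pi_cancel (M.mem_D_pair_inv_and_Pi_eq_one g).2 h h'

theorem eq_inv_of_Pi_pair_eq_one {p q : L} (h : [p, q] ∈ M.D) (h1 : M.Pi [p, q] = M.one) :
    p = M.inv q := by
  have hpq : [p, q, M.inv q] ∈ M.D := M.mem_append_wordInv (u := [p]) h
  calc p = M.Pi ([p] ++ [q, M.inv q] ++ []) := by
          rw [M.Pi_cancel_pair_inv q hpq (M.mem_single p), List.append_nil, M.Pi_single]
    _ = M.Pi ([] ++ [p, q] ++ [M.inv q]) := rfl
    _ = M.inv q := by rw [M.Pi_cancel h1 hpq (M.mem_single _), List.nil_append, M.Pi_single]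

theorem inv_Pi {w : List L} (h : w ∈ M.D) : M.inv (M.Pi w) = M.Pi (M.wordInv w) := by
  have hflat : [M.wordInv w, w].flatten ∈ M.D := by
    simp only [List.flatten_cons, List.flatten_nil, List.append_nil]
    exact M.mem_inv w h
  refine (M.eq_inv_of_Pi_pair_eq_one (M.map_Pi_mem_D hflat) ?_).symm
  show M.Pi ([M.wordInv w, w].map M.Pi) = M.one
  rw [← M.Pi_flatten hflat]
  simp only [List.flatten_cons, List.flatten_nil, List.append_nil]
  exact M.Pi_inv w h

theorem inv_conj {a g : L} (h : a ∈ M.Dg g) : M.inv (M.conj a g) = M.conj (M.inv a) g := by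
  simp [conj, M.inv_Pi h, wordInv, M.inv_inv]

theorem mem_D_pair_inv_append_of_mem_Dg {x g : L} (h : x ∈ M.Dg g) :
    [g, M.inv g, x, g, M.inv g] ∈ M.D :=
  M.mem_append_wordInv (u := [g, M.inv g, x])
    (by simpa [wordInv, M.inv_inv] using M.mem_wordInv_append (u := [M.inv g]) h)

theorem conj_mem_Dg_inv {x g : L} (h : x ∈ M.Dg g) : M.conj x g ∈ M.Dg (M.inv g) := by
  show [M.inv (M.inv g), M.Pi [M.inv g, x, g], M.inv g] ∈ M.D
  rw [M.inv_inv]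
  exact M.mem_assoc [g] [M.inv g, x, g] [M.inv g] (M.mem_D_pair_inv_append_of_mem_Dg h)

theorem conj_conj_inv {x g : L} (h : x ∈ M.Dg g) : M.conj (M.conj x g) (M.inv g) = x := by
  have hlong := M.mem_D_pair_inv_append_of_mem_Dg h
  have hx : [x, g, M.inv g] ∈ M.D := M.mem_append_right [g, M.inv g] _ hlong
  calc M.conj (M.conj x g) (M.inv g) = M.Pi ([g] ++ [M.inv g, x, g] ++ [M.inv g]) := by
        rw [M.Pi_assoc _ _ _ hlong, conj, conj, M.inv_inv]; rfl
    _ = M.Pi ([] ++ [g, M.inv g] ++ [x, g, M.inv g]) := rfl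
    _ = M.Pi ([x] ++ [g, M.inv g] ++ []) := M.Pi_cancel_pair_inv g hlong hx
    _ = x := by rw [M.Pi_cancel_pair_inv g hx (M.mem_single x), List.append_nil, M.Pi_single]

theorem conj_inv_conj {x g : L} (h : x ∈ M.Dg (M.inv g)) : M.conj (M.conj x (M.inv g)) g = x := by
  simpa [M.inv_inv] using M.conj_conj_inv h

theorem Pi_pair_conj {a b g : L} (hsplit : [M.inv g, a, g, M.inv g, b, g] ∈ M.D)
    (hjoin : [M.inv g, a, b, g] ∈ M.D) :
    M.Pi [M.conj a g, M.conj b g] = M.conj (M.Pi [a, b]) g :=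
  calc M.Pi [M.conj a g, M.conj b g]
      = M.Pi ([M.inv g, a] ++ [g, M.inv g] ++ [b, g]) :=
        (M.Pi_flatten (ws := [[M.inv g, a, g], [M.inv g, b, g]]) hsplit).symm
    _ = M.Pi ([M.inv g] ++ [a, b] ++ [g]) := M.Pi_cancel_pair_inv g hsplit hjoin
    _ = M.conj (M.Pi [a, b]) g := M.Pi_assoc _ _ _ hjoin

theorem Pi_triple_conj {a b c g : L}
    (hsplit : [M.inv g, a, g, M.inv g, b, g, M.inv g, c, g] ∈ M.D)
    (hmid : [M.inv g, a, b, g, M.inv g, c, g] ∈ M.D) (hjoin : [M.inv g, a, b, c, g] ∈ M.D) :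
    M.Pi [M.conj a g, M.conj b g, M.conj c g] = M.conj (M.Pi [a, b, c]) g :=
  calc M.Pi [M.conj a g, M.conj b g, M.conj c g]
      = M.Pi ([M.inv g, a] ++ [g, M.inv g] ++ [b, g, M.inv g, c, g]) :=
        (M.Pi_flatten (ws := [[M.inv g, a, g], [M.inv g, b, g], [M.inv g, c, g]]) hsplit).symm
    _ = M.Pi ([M.inv g, a, b] ++ [g, M.inv g] ++ [c, g]) := M.Pi_cancel_pair_inv g hsplit hmid
    _ = M.Pi ([M.inv g] ++ [a, b, c] ++ [g]) := M.Pi_cancel_pair_inv g hmid hjoin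
    _ = M.conj (M.Pi [a, b, c]) g := M.Pi_assoc _ _ _ hjoin

theorem setConjDef_setConj_inv {X : Set L} {g : L} (h : M.setConjDef X g) :
    M.setConjDef (M.setConj X g) (M.inv g) := by
  rintro _ ⟨x, hx, rfl⟩
  exact M.conj_mem_Dg_inv (h x hx)

theorem setConj_eq_image (X : Set L) (g : L) : M.setConj X g = (M.conj · g) '' X := by
  ext y
  simp [setConj, eq_comm]

theorem setConj_setConj_inv {X : Set L} {g : L} (h : M.setConjDef X g) :
    M.setConj (M.setConj X g) (M.inv g) = X := by
  rw [setConj_eq_image, setConj_eq_image, Set.image_image]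
  exact (Set.image_congr fun x hx => M.conj_conj_inv (h x hx)).trans (Set.image_id' X)

theorem setConj_setConj_congr {X : Set L} {a b g h : L}
    (H : ∀ x ∈ X, M.conj (M.conj x g) b = M.conj (M.conj x a) h) :
    M.setConj (M.setConj X g) b = M.setConj (M.setConj X a) h := by
  simp only [setConj_eq_image, Set.image_image]
  exact Set.image_congr H

theorem inv_mem_normalizer {X : Set L} {a : L} (ha : a ∈ M.normalizer X) :
    M.inv a ∈ M.normalizer X := by
  obtain ⟨hdef, heq⟩ := ha
  refine ⟨heq ▸ M.setConjDef_setConj_inv hdef, ?_⟩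
  conv_lhs => rw [← heq]
  exact M.setConj_setConj_inv hdef

theorem mem_normalizer_of_mem {X : Set L} (hX : M.IsSubgroup X) {x : L} (hx : x ∈ X) :
    x ∈ M.normalizer X := by
  obtain ⟨⟨-, hinv, hclosed⟩, hwords⟩ := hX
  have hword : ∀ {y z t : L}, y ∈ X → z ∈ X → t ∈ X → [y, z, t] ∈ M.D ∧ M.Pi [y, z, t] ∈ X := by
    intro y z t hy hz ht
    have hall : ∀ s ∈ [y, z, t], s ∈ X := by simp [hy, hz, ht]
    exact ⟨hwords _ hall, hclosed _ hall (hwords _ hall)⟩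
  have hxi := hinv x hx
  have hsub : M.setConj X x ⊆ X := by
    rintro _ ⟨z, hz, rfl⟩
    exact (hword hxi hz hx).2
  refine ⟨fun z hz => (hword hxi hz hx).1, hsub.antisymm fun z hz => ?_⟩
  have hzx : z ∈ M.Dg (M.inv x) := by simpa [Dg, M.inv_inv] using (hword hx hz hxi).1
  refine ⟨M.conj z (M.inv x), ?_, (M.conj_inv_conj hzx).symm⟩
  simpa [conj, M.inv_inv] using (hword hx hz hxi).2

section Objective

variable {M} {Δ : Set (Set L)}

theorem mem_D_of_viaChain (hobj : M.Objective Δ) {w : List L} {X : Set L}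
    (h : M.viaChain Δ w X) : w ∈ M.D := by
  rw [hobj.2.1]
  exact ⟨X, h⟩

theorem mem_of_viaChain {w : List L} {X : Set L} (h : M.viaChain Δ w X) : X ∈ Δ := by
  cases w with
  | nil => exact h
  | cons g w => exact h.1

theorem viaChain_append_of_forall_mem_normalizer {u w : List L} {X : Set L}
    (hu : ∀ a ∈ u, a ∈ M.normalizer X) (h : M.viaChain Δ w X) : M.viaChain Δ (u ++ w) X := by
  induction u with
  | nil => exact h
  | cons a u ih =>
    have ha := hu a List.mem_cons_self
    exact ⟨mem_of_viaChain h, ha.1, by rw [ha.2]; exact ih fun b hb => hu b (by simp [hb])⟩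

theorem viaChain_inv_cons {w : List L} {X : Set L} {g : L} (hdef : M.setConjDef X g)
    (hY : M.setConj X g ∈ Δ) (h : M.viaChain Δ w X) :
    M.viaChain Δ (M.inv g :: w) (M.setConj X g) :=
  ⟨hY, M.setConjDef_setConj_inv hdef, by rw [M.setConj_setConj_inv hdef]; exact h⟩

theorem viaChain_conj_cons {u w : List L} {X : Set L} {g : L} (hX : X ∈ Δ)
    (hdef : M.setConjDef X g) (hY : M.setConj X g ∈ Δ) (hu : ∀ a ∈ u, a ∈ M.normalizer X)
    (h : M.viaChain Δ w (M.setConj X g)) :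
    M.viaChain Δ (M.inv g :: (u ++ g :: w)) (M.setConj X g) :=
  viaChain_inv_cons hdef hY (viaChain_append_of_forall_mem_normalizer hu ⟨hX, hdef, h⟩)

theorem normalizer_subset_Dg (hobj : M.Objective Δ) {X : Set L} (hX : X ∈ Δ) {g : L}
    (hdef : M.setConjDef X g) (hY : M.setConj X g ∈ Δ) : M.normalizer X ⊆ M.Dg g :=
  fun x hx =>
    mem_D_of_viaChain hobj (viaChain_conj_cons (u := [x]) hX hdef hY (by simpa using hx) hY)

theorem conj_mem_normalizer_setConj (hobj : M.Objective Δ) {X : Set L} (hX : X ∈ Δ) {g : L}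
    (hdef : M.setConjDef X g) (hY : M.setConj X g ∈ Δ) {a : L} (ha : a ∈ M.normalizer X) :
    M.conj a g ∈ M.normalizer (M.setConj X g) := by
  have hD : ∀ {w : List L}, M.viaChain Δ w (M.setConj X g) → w ∈ M.D := mem_D_of_viaChain hobj
  have hseg : ∀ {u w : List L}, (∀ b ∈ u, b ∈ M.normalizer X) →
      M.viaChain Δ w (M.setConj X g) →
      M.viaChain Δ (M.inv g :: (u ++ g :: w)) (M.setConj X g) := viaChain_conj_cons hX hdef hY
  have ha' := M.inv_mem_normalizer ha
  have hag : M.viaChain Δ [M.inv g, a, g] (M.setConj X g) :=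
    hseg (u := [a]) (w := []) (by simpa using ha) hY
  have key : ∀ x ∈ X, M.conj x g ∈ M.Dg (M.conj a g) ∧
      M.conj (M.conj x g) (M.conj a g) = M.conj (M.conj x a) g := by
    intro x hxX
    have hx := M.mem_normalizer_of_mem (hobj.1 X hX) hxX
    have hsplit := hD (hseg (u := [M.inv a]) (by simpa using ha')
      (hseg (u := [x]) (by simpa using hx) hag))
    have hmid := hD (hseg (u := [M.inv a, x]) (by simp [ha', hx]) hag)
    have hjoin := hD (hseg (u := [M.inv a, x, a]) (w := []) (by simp [ha', hx, ha]) hY)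
    have hinv : M.inv (M.conj a g) = M.conj (M.inv a) g := M.inv_conj (hD hag)
    refine ⟨?_, ?_⟩
    · show [M.inv (M.conj a g), M.conj x g, M.conj a g] ∈ M.D
      rw [hinv]
      exact M.map_Pi_mem_D (ws := [[M.inv g, M.inv a, g], [M.inv g, x, g], [M.inv g, a, g]]) hsplit
    · rw [conj, hinv]
      exact M.Pi_triple_conj hsplit hmid hjoin
  refine ⟨?_, ?_⟩
  · rintro _ ⟨x, hx, rfl⟩
    exact (key x hx).1
  · rw [M.setConj_setConj_congr fun x hx => (key x hx).2, ha.2]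

end Objective

end PartialGroupOn

open PartialGroupOn

variable {L : Type u}

theorem conj_normalizer_iso (M : PartialGroupOn L) (Δ : Set (Set L))
    (hobj : M.Objective Δ) (X : Set L) (hX : X ∈ Δ) (g : L)
    (hdef : M.setConjDef X g) (hY : M.setConj X g ∈ Δ) :
    (∀ x ∈ M.normalizer X, x ∈ M.Dg g) ∧
    (∀ x ∈ M.normalizer X, M.conj x g ∈ M.normalizer (M.setConj X g)) ∧
    (∀ y ∈ M.normalizer (M.setConj X g),
      ∃! x : L, x ∈ M.normalizer X ∧ M.conj x g = y) ∧
    (∀ a ∈ M.normalizer X, ∀ b ∈ M.normalizer X,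
      [a, b] ∈ M.D ∧ [M.conj a g, M.conj b g] ∈ M.D ∧
        M.conj (M.Pi [a, b]) g = M.Pi [M.conj a g, M.conj b g]) := by
  have hD : ∀ {w : List L} {Z : Set L}, M.viaChain Δ w Z → w ∈ M.D := mem_D_of_viaChain hobj
  have hYd := M.setConjDef_setConj_inv hdef
  have hYX := M.setConj_setConj_inv hdef
  have hX' : M.setConj (M.setConj X g) (M.inv g) ∈ Δ := hYX.symm ▸ hX
  have hconj := fun x (hx : x ∈ M.normalizer X) => conj_mem_normalizer_setConj hobj hX hdef hY hx
  have hDg := normalizer_subset_Dg hobj hX hdef hY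
  refine ⟨hDg, hconj, fun y hy => ?_, fun a ha b hb => ?_⟩
  · refine ⟨M.conj y (M.inv g),
      ⟨?_, M.conj_inv_conj (normalizer_subset_Dg hobj hY hYd hX' hy)⟩, ?_⟩
    · simpa only [hYX] using conj_mem_normalizer_setConj hobj hY hYd hX' hy
    · rintro x ⟨hx, rfl⟩
      exact (M.conj_conj_inv (hDg hx)).symm
  · have hab : ∀ c ∈ [a, b], c ∈ M.normalizer X := by simp [ha, hb]
    have hab' : ∀ c ∈ [M.conj a g, M.conj b g], c ∈ M.normalizer (M.setConj X g) := by
      simp [hconj a ha, hconj b hb]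
    refine ⟨hD (viaChain_append_of_forall_mem_normalizer (w := []) hab hX),
      hD (viaChain_append_of_forall_mem_normalizer (w := []) hab' hY), (M.Pi_pair_conj ?_ ?_).symm⟩
    · exact hD (viaChain_conj_cons (u := [a]) hX hdef hY (by simpa using ha)
        (viaChain_conj_cons (u := [b]) hX hdef hY (by simpa using hb) hY))
    · exact hD (viaChain_conj_cons hX hdef hY hab hY)
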